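/- For every continuous function f : Ω → ℝ: |f∘σ − f|_∞ = |Kf − f|_∞ ≥ ‖[D, π(M_f)]‖ ≥ |f − Lf|_∞. Moreover, if f does not depend on the first coordinate (i.e. f(0x) = f(1x) for all x ∈ Ω), then |Kf − f|_∞ = ‖[D, π(M_f)]‖ = |f − Lf|_∞. -/

import Mathlib

open MeasureTheory ContinuousLinearMap
open scoped RealInnerProductSpace InnerProductSpace ENNReal

noncomputable section

/-- The shift space `Ω = {0,1}^ℕ`, with `false` playing the role of the symbol `0`
and `true` of the symbol `1`. -/
abbrev Ω : Type := ℕ → Bool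

/-- The shift map `σ`, `σ(x)ₙ = x_{n+1}`. -/
def shiftMap : Ω → Ω := fun x n => x (n + 1)

/-- Prepending a symbol: `consSeq a x = ax`. -/
def consSeq (a : Bool) (x : Ω) : Ω := fun n => Nat.casesOn n a (fun k => x k)

/-- The cylinder set `[w]` of sequences beginning with the finite word `w`. -/
def cylinder (w : List Bool) : Set Ω := {x | ∀ i : Fin w.length, x (i : ℕ) = w.get i}

/-- The Hilbert space `L²(μ)` (real). -/
abbrev E (μ : Measure Ω) := Lp (α := Ω) ℝ 2 μ

/-- The Hilbert space `H = L²(μ) × L²(μ)` with the norm `√(‖φ‖² + ‖ψ‖²)`. -/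
abbrev HS (μ : Measure Ω) := WithLp 2 (E μ × E μ)

variable {μ : Measure Ω}

/-- The diagonal block operator `(φ, ψ) ↦ (A₁φ, A₂ψ)` on `H`. -/
def blockDiag (A₁ A₂ : E μ →L[ℝ] E μ) : HS μ →L[ℝ] HS μ :=
  ((WithLp.prodContinuousLinearEquiv 2 ℝ (E μ) (E μ)).symm.toContinuousLinearMap).comp
    (((A₁.comp (ContinuousLinearMap.fst ℝ (E μ) (E μ))).prod
        (A₂.comp (ContinuousLinearMap.snd ℝ (E μ) (E μ)))).comp
      (WithLp.prodContinuousLinearEquiv 2 ℝ (E μ) (E μ)).toContinuousLinearMap)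

/-- The antidiagonal block operator `(φ, ψ) ↦ (A₁ψ, A₂φ)` on `H`. -/
def blockAntidiag (A₁ A₂ : E μ →L[ℝ] E μ) : HS μ →L[ℝ] HS μ :=
  ((WithLp.prodContinuousLinearEquiv 2 ℝ (E μ) (E μ)).symm.toContinuousLinearMap).comp
    (((A₁.comp (ContinuousLinearMap.snd ℝ (E μ) (E μ))).prod
        (A₂.comp (ContinuousLinearMap.fst ℝ (E μ) (E μ)))).comp
      (WithLp.prodContinuousLinearEquiv 2 ℝ (E μ) (E μ)).toContinuousLinearMap)

/-- The diagonal representation `π(A)(φ,ψ) = (Aφ, Aψ)`. -/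
def diagRep (A : E μ →L[ℝ] E μ) : HS μ →L[ℝ] HS μ := blockDiag A A

/-- The Dirac operator `D(φ,ψ) = (Kψ, Lφ)` associated with the pair `(K, L)`. -/
def dirac (K L : E μ →L[ℝ] E μ) : HS μ →L[ℝ] HS μ := blockAntidiag K L

/-- The commutator `[D, π(A)]`. -/
def commD (K L A : E μ →L[ℝ] E μ) : HS μ →L[ℝ] HS μ :=
  (dirac K L).comp (diagRep A) - (diagRep A).comp (dirac K L)

/-- The rank-one orthogonal projection onto the span of the unit vector `ψ`:
`φ ↦ ⟪ψ, φ⟫ • ψ`. -/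
def rankOneProj (ψ : E μ) : E μ →L[ℝ] E μ := (innerSL ℝ ψ).smulRight ψ

/-- The Haar-basis element `e_w = 2^{ℓ(w)/2} (χ_{[w1]} - χ_{[w0]})`, as a function on `Ω`. -/
def haarFun (w : List Bool) : Ω → ℝ := fun x =>
  (2 : ℝ) ^ ((w.length : ℝ) / 2) *
    ((cylinder (w ++ [true])).indicator 1 x - (cylinder (w ++ [false])).indicator 1 x)

lemma continuous_shiftMap : Continuous shiftMap :=
  continuous_pi fun n => continuous_apply (n + 1)

lemma continuous_consSeq (a : Bool) : Continuous (consSeq a) := by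
  apply continuous_pi
  intro n
  cases n with
  | zero => exact continuous_const
  | succ k => exact continuous_apply k

/-- The Koopman operator on continuous functions: `f ↦ f ∘ σ`. -/
def koopmanC (f : C(Ω, ℝ)) : C(Ω, ℝ) := f.comp ⟨shiftMap, continuous_shiftMap⟩

/-- The Ruelle operator on continuous functions: `(Lf)(x) = (f(0x) + f(1x))/2`. -/
def ruelleC (f : C(Ω, ℝ)) : C(Ω, ℝ) :=
  ⟨fun x => (f (consSeq false x) + f (consSeq true x)) / 2,
    ((f.continuous.comp (continuous_consSeq false)).add
      (f.continuous.comp (continuous_consSeq true))).div_const 2⟩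

end

/-!
Writing `C = [K, M_f]`, the commutator is `[D, π(M_f)] = (φ, ψ) ↦ (Cψ, -C†φ)`, so its norm is
`‖C‖`, and `(Cψ)(x) = (f(σx) - f(x)) ψ(σx)`. Since `σ` preserves `μ`, `ψ ↦ ψ ∘ σ` is an isometry
and `‖C‖ ≤ |f ∘ σ - f|_∞`. For the lower bound, test `C` on the indicator of a short cylinder
`[w]` around a point `z` against the indicator of `σ⁻¹[w] = [0w] ∪ [1w]` (which has the same
measure): on `[aw]` the integrand is close to `f(z) - f(az)`, so the pairing is close to
`μ[w] · (f - Lf)(z)`. If `f(0x) = f(1x)` then `Kf - f = (f - Lf) ∘ σ`, and `σ` is onto.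
-/

section Commutator

variable {F : Type*} [NormedAddCommGroup F] [InnerProductSpace ℝ F] [CompleteSpace F]

lemma norm_adjoint_comp_sub_comp_adjoint {K A : F →L[ℝ] F} (hA : IsSelfAdjoint A) :
    ‖adjoint K ∘L A - A ∘L adjoint K‖ = ‖K ∘L A - A ∘L K‖ := by
  rw [← LinearIsometryEquiv.norm_map adjoint (K ∘L A - A ∘L K), map_sub, adjoint_comp,
    adjoint_comp, hA.adjoint_eq, ← norm_neg, neg_sub]

end Commutator

section Lp

variable {α : Type*} [MeasurableSpace α] {μ : Measure α}

lemma isSelfAdjoint_of_ae_eq_mul {f : α → ℝ} {M : Lp ℝ 2 μ →L[ℝ] Lp ℝ 2 μ}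
    (hM : ∀ g : Lp ℝ 2 μ, M g =ᵐ[μ] fun x => f x * g x) : IsSelfAdjoint M := by
  refine isSelfAdjoint_iff_isSymmetric.mpr fun g₁ g₂ => ?_
  simp only [coe_coe, L2.inner_def]
  refine integral_congr_ae ?_
  filter_upwards [hM g₁, hM g₂] with x h₁ h₂
  simp only [h₁, h₂, RCLike.inner_apply, conj_trivial]
  ring

lemma comp_sub_comp_apply_ae_eq {T : α → α} (hT : Measure.QuasiMeasurePreserving T μ μ) {f : α → ℝ}
    {K M : Lp ℝ 2 μ →L[ℝ] Lp ℝ 2 μ} (hK : ∀ g : Lp ℝ 2 μ, K g =ᵐ[μ] fun x => g (T x))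
    (hM : ∀ g : Lp ℝ 2 μ, M g =ᵐ[μ] fun x => f x * g x) (g : Lp ℝ 2 μ) :
    (K ∘L M - M ∘L K) g =ᵐ[μ] fun x => (f (T x) - f x) * g (T x) := by
  filter_upwards [Lp.coeFn_sub (K (M g)) (M (K g)), hK (M g), hT.ae (hM g), hM (K g), hK g]
    with x hsub hKM hMg hMK hKg
  simp only [sub_apply, comp_apply, hsub, Pi.sub_apply, hKM, hMg, hMK, hKg]
  ring

lemma norm_apply_of_ae_eq_comp {T : α → α} (hT : MeasurePreserving T μ μ)
    {K : Lp ℝ 2 μ →L[ℝ] Lp ℝ 2 μ} (hK : ∀ g : Lp ℝ 2 μ, K g =ᵐ[μ] fun x => g (T x))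
    (g : Lp ℝ 2 μ) : ‖K g‖ = ‖g‖ := by
  rw [Lp.norm_def, Lp.norm_def, eLpNorm_congr_ae (hK g)]
  exact congrArg _ (eLpNorm_comp_measurePreserving (Lp.aestronglyMeasurable g) hT)

lemma norm_comp_sub_comp_le {T : α → α} (hT : MeasurePreserving T μ μ) {f : α → ℝ} {c : ℝ}
    (hc₀ : 0 ≤ c) (hc : ∀ x, |f (T x) - f x| ≤ c)
    {K M : Lp ℝ 2 μ →L[ℝ] Lp ℝ 2 μ} (hK : ∀ g : Lp ℝ 2 μ, K g =ᵐ[μ] fun x => g (T x))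
    (hM : ∀ g : Lp ℝ 2 μ, M g =ᵐ[μ] fun x => f x * g x) :
    ‖K ∘L M - M ∘L K‖ ≤ c := by
  refine opNorm_le_bound _ hc₀ fun g => ?_
  rw [← norm_apply_of_ae_eq_comp hT hK g]
  refine Lp.norm_le_mul_norm_of_ae_le_mul ?_
  filter_upwards [comp_sub_comp_apply_ae_eq hT.quasiMeasurePreserving hK hM g, hK g] with x hC hKg
  rw [hC, hKg, norm_mul, Real.norm_eq_abs]
  exact mul_le_mul_of_nonneg_right (hc x) (norm_nonneg _)

lemma abs_setIntegral_sub_le {u : α → ℝ} {s : Set α} (hs : μ s < ⊤) {c ε : ℝ}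
    (hu : IntegrableOn u s μ) (hε : ∀ x ∈ s, |u x - c| ≤ ε) :
    |∫ x in s, u x ∂μ - μ.real s * c| ≤ ε * μ.real s := by
  have := norm_setIntegral_le_of_norm_le_const (f := fun x => u x - c) hs hε
  rwa [integral_sub hu (integrableOn_const hs.ne), setIntegral_const, smul_eq_mul] at this

lemma abs_setIntegral_indicatorConstLp_le [IsFiniteMeasure μ] (C : Lp ℝ 2 μ →L[ℝ] Lp ℝ 2 μ)
    {s t : Set α} (hs : MeasurableSet s) (ht : MeasurableSet t) (hst : μ t = μ s) :
    |∫ x in t, C (indicatorConstLp 2 hs (measure_ne_top μ s) (1 : ℝ)) x ∂μ| ≤ ‖C‖ * μ.real s := by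
  have hnorm : ∀ {r : Set α} (hr : MeasurableSet r), μ r = μ s →
      ‖indicatorConstLp 2 hr (measure_ne_top μ r) (1 : ℝ)‖ = √(μ.real s) := by
    intro r hr hrs
    rw [norm_indicatorConstLp two_ne_zero ENNReal.ofNat_ne_top, measureReal_def, hrs,
      ← measureReal_def]
    simp [Real.sqrt_eq_rpow]
  rw [← L2.inner_indicatorConstLp_one ht (measure_ne_top μ t), ← Real.norm_eq_abs]
  calc _ ≤ _ := norm_inner_le_norm _ _
    _ ≤ √(μ.real s) * (‖C‖ * √(μ.real s)) := by
        rw [hnorm ht hst, ← hnorm hs rfl]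
        gcongr
        exact C.le_opNorm _
    _ = ‖C‖ * μ.real s := by
        rw [mul_left_comm, Real.mul_self_sqrt measureReal_nonneg]

end Lp

lemma ContinuousMap.norm_comp_of_surjective {X Y F : Type*} [TopologicalSpace X] [CompactSpace X]
    [TopologicalSpace Y] [CompactSpace Y] [SeminormedAddCommGroup F] (g : C(Y, F)) {h : C(X, Y)}
    (hh : Function.Surjective h) : ‖g.comp h‖ = ‖g‖ := by
  refine le_antisymm ((norm_le _ (norm_nonneg _)).mpr fun x => g.norm_coe_le_norm (h x))
    ((norm_le _ (norm_nonneg _)).mpr fun y => ?_)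
  obtain ⟨x, rfl⟩ := hh y
  exact (g.comp h).norm_coe_le_norm x

section BlockOperator

variable {μ : Measure Ω}

lemma blockAntidiag_toLp (A₁ A₂ : E μ →L[ℝ] E μ) (φ ψ : E μ) :
    blockAntidiag A₁ A₂ (WithLp.toLp 2 (φ, ψ)) = WithLp.toLp 2 (A₁ ψ, A₂ φ) :=
  rfl

lemma norm_sq_blockAntidiag_apply (A₁ A₂ : E μ →L[ℝ] E μ) (p : HS μ) :
    ‖blockAntidiag A₁ A₂ p‖ ^ 2 = ‖A₁ p.snd‖ ^ 2 + ‖A₂ p.fst‖ ^ 2 :=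
  WithLp.prod_norm_sq_eq_of_L2 _

lemma norm_blockAntidiag (A₁ A₂ : E μ →L[ℝ] E μ) :
    ‖blockAntidiag A₁ A₂‖ = max ‖A₁‖ ‖A₂‖ := by
  apply le_antisymm
  · refine opNorm_le_bound _ (by positivity) fun p => ?_
    refine (pow_le_pow_iff_left₀ (norm_nonneg _) (by positivity) two_ne_zero).mp ?_
    rw [norm_sq_blockAntidiag_apply, mul_pow, WithLp.prod_norm_sq_eq_of_L2, mul_add, add_comm,
      ← mul_pow, ← mul_pow]
    gcongr
    · exact (A₂.le_opNorm _).trans (by gcongr; exact le_max_right _ _)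
    · exact (A₁.le_opNorm _).trans (by gcongr; exact le_max_left _ _)
  · refine max_le (opNorm_le_bound _ (norm_nonneg _) fun ψ => ?_)
      (opNorm_le_bound _ (norm_nonneg _) fun φ => ?_)
    · simpa [blockAntidiag_toLp] using (blockAntidiag A₁ A₂).le_opNorm (WithLp.toLp 2 (0, ψ))
    · simpa [blockAntidiag_toLp] using (blockAntidiag A₁ A₂).le_opNorm (WithLp.toLp 2 (φ, 0))

lemma commD_eq_blockAntidiag (K L A : E μ →L[ℝ] E μ) :
    commD K L A = blockAntidiag (K ∘L A - A ∘L K) (L ∘L A - A ∘L L) :=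
  rfl

lemma norm_commD {K L A : E μ →L[ℝ] E μ} (hKL : adjoint K = L)
    (hA : IsSelfAdjoint A) : ‖commD K L A‖ = ‖K ∘L A - A ∘L K‖ := by
  rw [commD_eq_blockAntidiag, norm_blockAntidiag, ← hKL, norm_adjoint_comp_sub_comp_adjoint hA,
    max_self]

end BlockOperator

namespace FullShift

open Topology

def IsUniformBernoulli (μ : Measure Ω) : Prop :=
  ∀ w : List Bool, μ (cylinder w) = (1 / 2) ^ w.length

lemma mem_cylinder {w : List Bool} {x : Ω} :
    x ∈ cylinder w ↔ ∀ i (hi : i < w.length), x i = w[i] :=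
  ⟨fun h i hi => h ⟨i, hi⟩, fun h i => h i i.2⟩

lemma mem_cylinder_cons {a : Bool} {w : List Bool} {x : Ω} :
    x ∈ cylinder (a :: w) ↔ x 0 = a ∧ shiftMap x ∈ cylinder w := by
  simp only [mem_cylinder, List.length_cons, Nat.forall_lt_succ_left', List.getElem_cons_zero,
    List.getElem_cons_succ]
  rfl

lemma mem_cylinder_singleton {a : Bool} {x : Ω} : x ∈ cylinder [a] ↔ x 0 = a := by
  simp [mem_cylinder]

lemma disjoint_cylinder_false_true (w : List Bool) :
    Disjoint (cylinder (false :: w)) (cylinder (true :: w)) :=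
  Set.disjoint_left.mpr fun _ h₀ h₁ => by
    simp [(mem_cylinder_cons.mp h₀).1, mem_cylinder_cons] at h₁

lemma shiftMap_preimage_cylinder (w : List Bool) :
    shiftMap ⁻¹' cylinder w = cylinder (false :: w) ∪ cylinder (true :: w) := by
  ext x
  cases h : x 0 <;> simp [mem_cylinder_cons, h]

lemma cylinder_subset_of_length_le {w v : List Bool} (hwv : w.length ≤ v.length)
    (h : (cylinder w ∩ cylinder v).Nonempty) : cylinder v ⊆ cylinder w := by
  obtain ⟨x, hxw, hxv⟩ := h
  refine fun y hy => mem_cylinder.mpr fun i hi => ?_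
  have hi' : i < v.length := hi.trans_le hwv
  rw [← mem_cylinder.mp hxw i hi, mem_cylinder.mp hxv i hi', mem_cylinder.mp hy i hi']

lemma isPiSystem_range_cylinder : IsPiSystem (Set.range cylinder) := by
  rintro _ ⟨w, rfl⟩ _ ⟨v, rfl⟩ h
  rcases le_total w.length v.length with hwv | hvw
  · exact ⟨v, (Set.inter_eq_right.mpr (cylinder_subset_of_length_le hwv h)).symm⟩
  · rw [Set.inter_comm] at h ⊢
    exact ⟨w, (Set.inter_eq_right.mpr (cylinder_subset_of_length_le hvw h)).symm⟩

lemma measurableSet_cylinder (w : List Bool) : MeasurableSet (cylinder w) := by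
  have : cylinder w = ⋂ (i) (hi : i < w.length), (fun x : Ω => x i) ⁻¹' {w[i]} := by
    ext; simp [mem_cylinder]
  rw [this]
  exact .iInter fun i => .iInter fun _ => measurable_pi_apply _ (measurableSet_singleton _)

lemma iterate_shiftMap_apply (n : ℕ) (x : Ω) (k : ℕ) : shiftMap^[n] x k = x (k + n) := by
  induction n generalizing x with
  | zero => rfl
  | succ n ih => rw [Function.iterate_succ_apply, ih]; rfl

lemma measurableSpace_eq_generateFrom_cylinder :
    (inferInstance : MeasurableSpace Ω) = .generateFrom (Set.range cylinder) := by
  refine le_antisymm ?_ <| MeasurableSpace.generateFrom_le fun _ ⟨w, hw⟩ =>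
    hw ▸ measurableSet_cylinder w
  let m : MeasurableSpace Ω := .generateFrom (Set.range cylinder)
  have hcyl (w : List Bool) : MeasurableSet[m] (cylinder w) :=
    MeasurableSpace.measurableSet_generateFrom ⟨w, rfl⟩
  have hσ : Measurable[m, m] shiftMap := by
    refine measurable_generateFrom fun _ ⟨w, hw⟩ => ?_
    rw [← hw, shiftMap_preimage_cylinder]
    exact (hcyl _).union (hcyl _)
  have h₀ : Measurable[m] fun x : Ω => x 0 := by
    refine measurable_to_countable' fun b => ?_
    convert hcyl [b]
    ext x
    simp [mem_cylinder_singleton]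
  have hcoord (i : ℕ) : (fun x : Ω => x i) = (fun x : Ω => x 0) ∘ shiftMap^[i] := by
    ext x; simp [iterate_shiftMap_apply]
  exact measurable_pi_iff.mpr fun i => hcoord i ▸ h₀.comp (hσ.iterate i)

lemma measure_cylinder_cons {μ : Measure Ω} (hμ : IsUniformBernoulli μ) (a : Bool)
    (w : List Bool) :
    μ (cylinder (a :: w)) = μ (cylinder w) / 2 := by
  rw [hμ, hμ, List.length_cons, pow_succ, one_div, div_eq_mul_inv]

lemma measureReal_cylinder_cons {μ : Measure Ω} (hμ : IsUniformBernoulli μ) (a : Bool)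
    (w : List Bool) : μ.real (cylinder (a :: w)) = μ.real (cylinder w) / 2 := by
  rw [measureReal_def, measure_cylinder_cons hμ, ENNReal.toReal_div, measureReal_def]
  rfl

lemma measurePreserving_shiftMap {μ : Measure Ω} [IsProbabilityMeasure μ]
    (hμ : IsUniformBernoulli μ) :
    MeasurePreserving shiftMap μ μ := by
  have hσ : Measurable shiftMap := measurable_pi_lambda _ fun n => measurable_pi_apply (n + 1)
  refine ⟨hσ, ext_of_generate_finite _ measurableSpace_eq_generateFrom_cylinder
    isPiSystem_range_cylinder ?_ (by simp [Measure.map_apply hσ .univ])⟩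
  rintro _ ⟨w, rfl⟩
  rw [Measure.map_apply hσ (measurableSet_cylinder w), shiftMap_preimage_cylinder,
    measure_union (disjoint_cylinder_false_true w) (measurableSet_cylinder _),
    measure_cylinder_cons hμ, measure_cylinder_cons hμ, ENNReal.add_halves]

lemma consSeq_apply_zero_shiftMap (x : Ω) : consSeq (x 0) (shiftMap x) = x := by
  funext n
  cases n <;> rfl

lemma shiftMap_surjective : Function.Surjective shiftMap :=
  fun x => ⟨consSeq false x, rfl⟩

lemma exists_cylinder_subset_of_mem_nhds {z : Ω} {U : Set Ω} (hU : U ∈ 𝓝 z) :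
    ∃ w : List Bool, z ∈ cylinder w ∧ cylinder w ⊆ U := by
  rw [nhds_pi, Filter.mem_pi] at hU
  obtain ⟨I, hI, t, ht, hsub⟩ := hU
  obtain ⟨n, hn⟩ := hI.bddAbove
  refine ⟨List.ofFn fun i : Fin (n + 1) => z i,
    mem_cylinder.mpr fun i hi => by simp [-List.ofFn_succ], fun y hy => hsub fun i hi => ?_⟩
  have hyz : y i = z i := by
    have := mem_cylinder.mp hy i (by rw [List.length_ofFn]; exact Nat.lt_succ_of_le (hn hi))
    rwa [List.getElem_ofFn] at this
  exact hyz ▸ mem_of_mem_nhds (ht i)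

lemma koopmanC_sub_eq_comp {f : C(Ω, ℝ)}
    (hf : ∀ x : Ω, f (consSeq false x) = f (consSeq true x)) :
    koopmanC f - f = (f - ruelleC f).comp ⟨shiftMap, continuous_shiftMap⟩ := by
  ext x
  have hx : f x = f (consSeq false (shiftMap x)) := by
    conv_lhs => rw [← consSeq_apply_zero_shiftMap x]
    cases x 0
    · rfl
    · exact (hf _).symm
  simp only [ContinuousMap.sub_apply, koopmanC, ruelleC, ContinuousMap.comp_apply,
    ContinuousMap.coe_mk, hx, ← hf]
  ring

lemma abs_sub_ruelleC_apply_le {μ : Measure Ω} [IsProbabilityMeasure μ] (hμ : IsUniformBernoulli μ)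
    {K : E μ →L[ℝ] E μ} (hK : ∀ g : E μ, (K g : Ω → ℝ) =ᵐ[μ] fun x => g (shiftMap x))
    {f : C(Ω, ℝ)} {Mf : E μ →L[ℝ] E μ}
    (hMf : ∀ g : E μ, (Mf g : Ω → ℝ) =ᵐ[μ] fun x => f x * g x) (z : Ω) :
    |(f - ruelleC f) z| ≤ ‖K ∘L Mf - Mf ∘L K‖ := by
  have hσ := measurePreserving_shiftMap hμ
  refine le_of_forall_pos_le_add fun ε hε => ?_
  let g (a : Bool) (y : Ω) : ℝ := f y - f (consSeq a y)
  have hU : ∀ᶠ y in 𝓝 z, ∀ a, dist (g a y) (g a z) ≤ ε :=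
    Filter.eventually_all.mpr fun a =>
      ((f.continuous.sub (f.continuous.comp (continuous_consSeq a))).continuousAt).eventually
        (Metric.closedBall_mem_nhds _ hε)
  obtain ⟨w, -, hwU⟩ := exists_cylinder_subset_of_mem_nhds hU
  have hs := measurableSet_cylinder w
  set m := μ.real (cylinder w)
  have hm : 0 < m := by simp [m, measureReal_def, hμ w]
  have hint : Integrable (fun x => f (shiftMap x) - f x) μ :=
    (koopmanC f - f).continuous.integrable_of_hasCompactSupport (.of_compactSpace _)
  have hpiece (a : Bool) : |∫ x in cylinder (a :: w), (f (shiftMap x) - f x) ∂μ - m / 2 * g a z|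
      ≤ ε * (m / 2) := by
    rw [← measureReal_cylinder_cons hμ a]
    refine abs_setIntegral_sub_le (measure_lt_top _ _) ?_ fun x hx => ?_
    · exact hint.integrableOn
    · obtain ⟨hx0, hxw⟩ := mem_cylinder_cons.mp hx
      have hgx : f (shiftMap x) - f x = g a (shiftMap x) := by
        rw [← hx0, ← consSeq_apply_zero_shiftMap x]
        rfl
      rw [hgx, ← Real.dist_eq]
      exact hwU hxw a
  have hpre : MeasurableSet (shiftMap ⁻¹' cylinder w) := hσ.measurable hs
  have hvalue : ∫ x in shiftMap ⁻¹' cylinder w,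
      (K ∘L Mf - Mf ∘L K) (indicatorConstLp 2 hs (measure_ne_top μ _) (1 : ℝ)) x ∂μ
      = ∑ a : Bool, ∫ x in cylinder (a :: w), (f (shiftMap x) - f x) ∂μ := by
    rw [setIntegral_congr_ae hpre ?_, shiftMap_preimage_cylinder,
      setIntegral_union (disjoint_cylinder_false_true w) (measurableSet_cylinder _)
        hint.integrableOn hint.integrableOn, Fintype.sum_bool, add_comm]
    filter_upwards [comp_sub_comp_apply_ae_eq hσ.quasiMeasurePreserving hK hMf _,
      hσ.quasiMeasurePreserving.ae (indicatorConstLp_coeFn_mem (hs := hs) (c := (1 : ℝ)))]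
      with x hC h1 hx
    rw [hC, h1 hx, mul_one]
  have hbound := abs_setIntegral_indicatorConstLp_le (K ∘L Mf - Mf ∘L K) hs hpre
    (hσ.measure_preimage hs.nullMeasurableSet)
  rw [hvalue, Fintype.sum_bool] at hbound
  have hz : (f - ruelleC f) z = (g true z + g false z) / 2 := by
    simp only [ContinuousMap.sub_apply, ruelleC, ContinuousMap.coe_mk, g]
    ring
  have htrue := abs_le.mp (hpiece true)
  have hfalse := abs_le.mp (hpiece false)
  have hC := abs_le.mp hbound
  refine le_of_mul_le_mul_right ?_ hm
  rw [← abs_of_pos hm, ← abs_mul, abs_of_pos hm, hz, abs_le]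
  constructor <;> linarith

end FullShift

theorem stmt14_general
    (μ : Measure Ω) [IsProbabilityMeasure μ]
    (hμ : ∀ w : List Bool, μ (cylinder w) = (1 / 2) ^ w.length)
    (K L : E μ →L[ℝ] E μ)
    (hK : ∀ g : E μ, (K g : Ω → ℝ) =ᵐ[μ] fun x => g (shiftMap x))
    (hadj : ContinuousLinearMap.adjoint K = L)
    (f : C(Ω, ℝ)) (Mf : E μ →L[ℝ] E μ)
    (hMf : ∀ g : E μ, (Mf g : Ω → ℝ) =ᵐ[μ] fun x => f x * g x) :
    ‖f.comp ⟨shiftMap, continuous_shiftMap⟩ - f‖ = ‖koopmanC f - f‖ ∧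
    ‖koopmanC f - f‖ ≥ ‖commD K L Mf‖ ∧
    ‖commD K L Mf‖ ≥ ‖f - ruelleC f‖ ∧
    ((∀ x : Ω, f (consSeq false x) = f (consSeq true x)) →
      ‖koopmanC f - f‖ = ‖commD K L Mf‖ ∧ ‖commD K L Mf‖ = ‖f - ruelleC f‖) := by
  have hD : ‖commD K L Mf‖ = ‖K ∘L Mf - Mf ∘L K‖ :=
    norm_commD hadj (isSelfAdjoint_of_ae_eq_mul hMf)
  have hupper : ‖K ∘L Mf - Mf ∘L K‖ ≤ ‖koopmanC f - f‖ :=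
    norm_comp_sub_comp_le (FullShift.measurePreserving_shiftMap hμ) (norm_nonneg _)
      (koopmanC f - f).norm_coe_le_norm hK hMf
  have hlower : ‖f - ruelleC f‖ ≤ ‖K ∘L Mf - Mf ∘L K‖ :=
    (ContinuousMap.norm_le _ (norm_nonneg _)).mpr (FullShift.abs_sub_ruelleC_apply_le hμ hK hMf)
  refine ⟨rfl, hD ▸ hupper, hD ▸ hlower, fun hf => ?_⟩
  have hKL : ‖koopmanC f - f‖ = ‖f - ruelleC f‖ := by
    rw [FullShift.koopmanC_sub_eq_comp hf,
      ContinuousMap.norm_comp_of_surjective _ FullShift.shiftMap_surjective]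
  rw [hD]
  exact ⟨le_antisymm (hKL ▸ hlower) hupper, le_antisymm (hKL ▸ hupper) hlower⟩

/-- `|f∘σ − f|_∞ = |Kf − f|_∞ ≥ ‖[D, π(M_f)]‖ ≥ |f − Lf|_∞`, with equalities when
`f` does not depend on the first coordinate. -/
theorem stmt14
    (μ : Measure Ω) [IsProbabilityMeasure μ]
    (hμ : ∀ w : List Bool, μ (cylinder w) = (1 / 2) ^ w.length)
    (K L : E μ →L[ℝ] E μ)
    (hK : ∀ g : E μ, (K g : Ω → ℝ) =ᵐ[μ] fun x => g (shiftMap x))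
    (hL : ∀ g : E μ, (L g : Ω → ℝ) =ᵐ[μ]
      fun x => (g (consSeq false x) + g (consSeq true x)) / 2)
    (hadj : ContinuousLinearMap.adjoint K = L)
    (f : C(Ω, ℝ)) (Mf : E μ →L[ℝ] E μ)
    (hMf : ∀ g : E μ, (Mf g : Ω → ℝ) =ᵐ[μ] fun x => f x * g x) :
    ‖f.comp ⟨shiftMap, continuous_shiftMap⟩ - f‖ = ‖koopmanC f - f‖ ∧
    ‖koopmanC f - f‖ ≥ ‖commD K L Mf‖ ∧
    ‖commD K L Mf‖ ≥ ‖f - ruelleC f‖ ∧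
    ((∀ x : Ω, f (consSeq false x) = f (consSeq true x)) →
      ‖koopmanC f - f‖ = ‖commD K L Mf‖ ∧ ‖commD K L Mf‖ = ‖f - ruelleC f‖) :=
  stmt14_general μ hμ K L hK hadj f Mf hMf
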